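/- There exists a finite simple connected graph G with at least two vertices such that μ(G) > max over all pairs of adjacent vertices v_i ~ v_j of G of 2 + √((m_i − m_j)² + 4·d_i·d_j − 4·(m_i + m_j) + 4). (This disproves conjectured edge-maximum bound 68 of Brankov, Hansen and Stevanović.) -/

import Mathlib

/-!
Take the spider with ten legs of length two: a body of degree 10, ten knees of degree 2 and
ten feet of degree 1. Then `(d, m)` is `(10, 2)` at the body, `(2, 11/2)` at a knee and `(1, 2)`
at a foot, so the bound equals `2 + √(265/4) ≈ 10.14` on body–knee edges and `2` on knee–foot
edges, where the radicand is negative and `Real.sqrt` returns `0`. The test vector `x` equal to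
`10` on the body, `-1` on the knees and `0` on the feet has
`∑_{uv ∈ E} (x_u - x_v)² = 10·11² + 10 = 1220` and `‖x‖² = 110`, so by the Rayleigh principle
`μ ≥ 122/11 ≈ 11.09`.
-/

noncomputable section

open Finset

/-- The degree of a vertex, as a real number. -/
def degR {V : Type*} [Fintype V] (G : SimpleGraph V) (v : V) : ℝ :=
  letI := Classical.decRel G.Adj
  (G.degree v : ℝ)

/-- The average degree of the neighbours of a vertex, as a real number:
`m_v = (∑_{u ~ v} d_u) / d_v`. -/
def avgDegR {V : Type*} [Fintype V] (G : SimpleGraph V) (v : V) : ℝ :=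
  letI := Classical.decRel G.Adj
  (∑ u ∈ G.neighborFinset v, (G.degree u : ℝ)) / (G.degree v : ℝ)

/-- The largest eigenvalue of the Laplacian matrix `L = D - A` of a finite graph. -/
def lapSpecRad {V : Type*} [Fintype V] [DecidableEq V] [Nonempty V]
    (G : SimpleGraph V) : ℝ :=
  letI := Classical.decRel G.Adj
  ⨆ i, (SimpleGraph.posSemidef_lapMatrix ℝ G).isHermitian.eigenvalues i

open Matrix

theorem Matrix.IsHermitian.dotProduct_mulVec_le_iSup_eigenvalues_mul {n : Type*} [Fintype n]
    [DecidableEq n] {A : Matrix n n ℝ} (hA : A.IsHermitian) (x : n → ℝ) :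
    x ⬝ᵥ (A *ᵥ x) ≤ (⨆ i, hA.eigenvalues i) * (x ⬝ᵥ x) := by
  set U : Matrix n n ℝ := (hA.eigenvectorUnitary : Matrix n n ℝ)
  have hstar : star U = Uᵀ := by
    rw [star_eq_conjTranspose, conjTranspose_eq_transpose_of_trivial]
  have hU : U * star U = 1 := mem_unitaryGroup_iff.mp hA.eigenvectorUnitary.2
  set y := star U *ᵥ x
  have hdot (w : n → ℝ) : x ⬝ᵥ (U *ᵥ w) = y ⬝ᵥ w := by
    rw [dotProduct_mulVec, ← mulVec_transpose, ← hstar]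
  have hquad : x ⬝ᵥ (A *ᵥ x) = ∑ i, hA.eigenvalues i * y i ^ 2 := by
    conv_lhs => rw [hA.spectral_theorem, Unitary.conjStarAlgAut_apply]
    rw [← mulVec_mulVec, ← mulVec_mulVec, hdot]
    simp only [dotProduct, mulVec_diagonal, Function.comp_apply, RCLike.ofReal_real_eq_id, id_eq]
    exact sum_congr rfl fun i _ => by ring
  have hnorm : x ⬝ᵥ x = ∑ i, y i ^ 2 := by
    have : y ⬝ᵥ y = x ⬝ᵥ x := by
      rw [← hdot, mulVec_mulVec, hU, one_mulVec]
    rw [← this, dotProduct]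
    exact sum_congr rfl fun i _ => by ring
  rw [hquad, hnorm, mul_sum]
  exact sum_le_sum fun i _ => mul_le_mul_of_nonneg_right
    (le_ciSup (Set.finite_range _).bddAbove i) (sq_nonneg _)

namespace SimpleGraph

variable {V : Type*} [Fintype V] (G : SimpleGraph V) [DecidableRel G.Adj]

theorem degR_eq (v : V) : degR G v = G.degree v := by
  unfold degR
  rw [Subsingleton.elim (Classical.decRel G.Adj) ‹_›]

theorem avgDegR_eq (v : V) :
    avgDegR G v = ((∑ u ∈ G.neighborFinset v, G.degree u : ℕ) : ℝ) / G.degree v := by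
  unfold avgDegR
  rw [Subsingleton.elim (Classical.decRel G.Adj) ‹_›, Nat.cast_sum]

theorem lapSpecRad_eq [DecidableEq V] [Nonempty V] :
    lapSpecRad G = ⨆ i, (posSemidef_lapMatrix ℝ G).isHermitian.eigenvalues i := by
  unfold lapSpecRad
  congr!

theorem sum_adj_sq_sub_le_lapSpecRad_mul [DecidableEq V] [Nonempty V] (x : V → ℝ) :
    (∑ i, ∑ j, if G.Adj i j then (x i - x j) ^ 2 else 0) / 2 ≤ lapSpecRad G * ∑ i, x i ^ 2 := by
  rw [lapSpecRad_eq, ← lapMatrix_toLinearMap₂', toLinearMap₂'_apply']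
  convert (posSemidef_lapMatrix ℝ G).isHermitian.dotProduct_mulVec_le_iSup_eigenvalues_mul x
  simp only [dotProduct, sq]

end SimpleGraph

/-- `p` and `q` are the pairs `(d, m)` of the two ends of an edge. -/
def bound68 (p q : ℝ × ℝ) : ℝ :=
  2 + √((p.2 - q.2) ^ 2 + 4 * p.1 * q.1 - 4 * (p.2 + q.2) + 4)

/-- Vertex `0` is the body, `1, …, 10` are the knees and `v + 10` is the foot below knee `v`. -/
def spider : SimpleGraph (Fin 21) :=
  SimpleGraph.fromRel fun i j => (i = 0 ∧ 1 ≤ j.val ∧ j.val ≤ 10) ∨ (j.val = i.val + 10 ∧ 1 ≤ i.val)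

instance : DecidableRel spider.Adj := fun _ _ =>
  inferInstanceAs (Decidable (_ ∧ _))

namespace spider

theorem degree_eq : ∀ v : Fin 21,
    spider.degree v = if v.val = 0 then 10 else if v.val ≤ 10 then 2 else 1 := by
  decide

theorem sum_degree_neighborFinset : ∀ v : Fin 21,
    ∑ u ∈ spider.neighborFinset v, spider.degree u =
      if v.val = 0 then 20 else if v.val ≤ 10 then 11 else 2 := by
  decide

theorem degR_avgDegR (v : Fin 21) :
    (degR spider v, avgDegR spider v) =
      if v.val = 0 then (10, 2) else if v.val ≤ 10 then (2, 11 / 2) else (1, 2) := by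
  rw [SimpleGraph.degR_eq, SimpleGraph.avgDegR_eq, degree_eq, sum_degree_neighborFinset]
  split_ifs <;> first | omega | norm_num

theorem connected : spider.Connected := by
  have hnear : ∀ v : Fin 21, v = 0 ∨ spider.Adj 0 v ∨ ∃ w, spider.Adj 0 w ∧ spider.Adj w v := by
    decide
  have hreach (v : Fin 21) : spider.Reachable 0 v := by
    obtain rfl | h | ⟨w, h₁, h₂⟩ := hnear v
    exacts [.rfl, h.reachable, h₁.reachable.trans h₂.reachable]
  exact (SimpleGraph.connected_iff _).mpr ⟨fun u v => (hreach u).symm.trans (hreach v), ⟨0⟩⟩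

def testVector (v : Fin 21) : ℤ := if v.val = 0 then 10 else if v.val ≤ 10 then -1 else 0

theorem sum_adj_sq_sub_testVector :
    ∑ i, ∑ j, (if spider.Adj i j then (testVector i - testVector j) ^ 2 else 0) = 2440 := by
  decide

theorem sum_testVector_sq : ∑ i, testVector i ^ 2 = 110 := by
  decide

theorem le_lapSpecRad : (122 / 11 : ℝ) ≤ lapSpecRad spider := by
  have h := spider.sum_adj_sq_sub_le_lapSpecRad_mul fun v => (testVector v : ℝ)
  have hq : (∑ i, ∑ j, if spider.Adj i j then ((testVector i : ℝ) - testVector j) ^ 2 else 0) =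
      2440 := by exact_mod_cast sum_adj_sq_sub_testVector
  have hn : ∑ i, (testVector i : ℝ) ^ 2 = 110 := by exact_mod_cast sum_testVector_sq
  rw [hq, hn] at h
  linarith

theorem bound68_lt_of_adj {i j : Fin 21} (h : spider.Adj i j) :
    bound68 (degR spider i, avgDegR spider i) (degR spider j, avgDegR spider j) < 122 / 11 := by
  have hsqrt : √265 < 200 / 11 := (Real.sqrt_lt' (by norm_num)).mpr (by norm_num)
  obtain ⟨-, h | h⟩ := h
  all_goals
    simp only [degR_avgDegR]
    split_ifs <;> first | omega | (norm_num [bound68] <;> linarith)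

end spider

/-- There exists a finite simple connected graph `G` with at least two vertices whose
Laplacian spectral radius exceeds the conjectured edge-maximum bound. -/
theorem exists_counterexample_bound68 :
    ∃ (V : Type) (_ : Fintype V) (_ : DecidableEq V) (_ : Nonempty V)
      (G : SimpleGraph V), G.Connected ∧ 2 ≤ Fintype.card V ∧
      ∀ i j : V, G.Adj i j →
        (fun di mi dj mj => 2 + Real.sqrt ((mi - mj) ^ 2 + 4 * di * dj - 4 * (mi + mj) + 4))
          (degR G i) (avgDegR G i) (degR G j) (avgDegR G j) < lapSpecRad G := by
  refine ⟨Fin 21, inferInstance, inferInstance, inferInstance, spider, spider.connected,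
    by simp, fun i j h => ?_⟩
  exact (spider.bound68_lt_of_adj h).trans_le spider.le_lapSpecRad
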